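/- Let m > 0 and let c : ℍ → ℝ be a continuous function with c(z) ≥ m for all z ∈ ℍ. If v : ℍ → ℝ is a bounded C² function such that the function w := −Δ_ℍ v + c·v is bounded, then sup_{z ∈ ℍ} |v(z)| ≤ m⁻¹ · sup_{z ∈ ℍ} |w(z)|. -/

import Mathlib

/-- The upper half-plane, as a subset of `ℂ`. -/
def UpperH : Set ℂ := {z : ℂ | 0 < z.im}

/-- The hyperbolic Laplacian of `u : ℂ → ℝ` at `z`:
`Δ_ℍ u(z) = (Im z)² (∂²u/∂x² + ∂²u/∂y²)(z)`. -/
noncomputable def hypLaplacian (u : ℂ → ℝ) (z : ℂ) : ℝ :=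
  z.im ^ 2 * (iteratedDeriv 2 (fun t : ℝ => u (z + (t : ℂ))) 0 +
              iteratedDeriv 2 (fun t : ℝ => u (z + (t : ℂ) * Complex.I)) 0)

/-- The hyperbolic distance on the upper half-plane. -/
noncomputable def hypDist (z w : ℂ) : ℝ :=
  2 * Real.arsinh (‖z - w‖ / (2 * Real.sqrt (z.im * w.im)))

/-!
Penalize by the exhaustion `φ = log (2 cosh d_ℍ(·, i))`: its sublevel sets are compact and
`Δ_ℍ φ = 1 + sech² d_ℍ(·, i) ≤ 2`. For `ε > 0` the function `v - ε φ`, with `v` bounded above,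
therefore attains its maximum at some `z₀ ∈ ℍ`, where `Δ_ℍ v ≤ ε Δ_ℍ φ ≤ 2ε`. If `v(z₀) > 0`
this gives `m v(z₀) ≤ c v(z₀) ≤ sup |Lv| + 2ε`, and everywhere `v ≤ v(z₀) + ε φ`. Letting
`ε → 0` bounds `v` by `m⁻¹ sup |Lv|`; the same applied to `-v` bounds `|v|`.
-/

open Filter Set Topology Real

theorem isOpen_upperH : IsOpen UpperH := isOpen_lt continuous_const Complex.continuous_im

theorem IsLocalMax.iteratedDeriv_two_nonpos {f : ℝ → ℝ} {a : ℝ} (h : IsLocalMax f a)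
    (hc : ContinuousAt f a) : iteratedDeriv 2 f a ≤ 0 := by
  rw [iteratedDeriv_succ, iteratedDeriv_one]
  -- if `f'' a > 0`, the second-derivative test makes `a` a local minimum too, so `f` is
  -- locally constant near `a` and `f'' a = 0`
  by_contra! hpos
  have hmin := isLocalMin_of_deriv_deriv_pos hpos h.deriv_eq_zero hc
  have hconst : f =ᶠ[𝓝 a] fun _ ↦ f a := h.and hmin |>.mono fun _ hx ↦ le_antisymm hx.1 hx.2
  simp [hconst.deriv.deriv_eq] at hpos

theorem ContDiffAt.comp_add_ofReal_mul {E : Type*} [NormedAddCommGroup E] [NormedSpace ℝ E]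
    {n : WithTop ℕ∞} {u : ℂ → E} {z : ℂ} (w : ℂ) (hu : ContDiffAt ℝ n u z) :
    ContDiffAt ℝ n (fun t : ℝ ↦ u (z + t * w)) 0 := by
  refine ContDiffAt.comp (g := u) 0 (by simpa using hu) ?_
  exact (contDiff_const.add (Complex.ofRealCLM.contDiff.mul contDiff_const)).contDiffAt

theorem hypLaplacian_nonpos_of_isLocalMax {u : ℂ → ℝ} {z : ℂ} (hu : ContinuousAt u z)
    (h : IsLocalMax u z) : hypLaplacian u z ≤ 0 := by
  have hline (w : ℂ) : iteratedDeriv 2 (fun t : ℝ ↦ u (z + t * w)) 0 ≤ 0 := by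
    have hcont : ContinuousAt (fun t : ℝ ↦ z + t * w) 0 := by fun_prop
    have hz : z + ((0 : ℝ) : ℂ) * w = z := by simp
    rw [← hz] at h hu
    exact (h.comp_continuous (g := fun t : ℝ ↦ z + t * w) hcont).iteratedDeriv_two_nonpos
      (ContinuousAt.comp (g := u) hu hcont)
  have hx := hline 1
  simp only [mul_one] at hx
  exact mul_nonpos_of_nonneg_of_nonpos (sq_nonneg _) (add_nonpos hx (hline Complex.I))

theorem hypLaplacian_sub_const_mul {u φ : ℂ → ℝ} {z : ℂ} (hu : ContDiffAt ℝ 2 u z)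
    (hφ : ContDiffAt ℝ 2 φ z) (ε : ℝ) :
    hypLaplacian (fun w ↦ u w - ε * φ w) z = hypLaplacian u z - ε * hypLaplacian φ z := by
  have hline (w : ℂ) : iteratedDeriv 2 (fun t : ℝ ↦ u (z + t * w) - ε * φ (z + t * w)) 0 =
      iteratedDeriv 2 (fun t : ℝ ↦ u (z + t * w)) 0 -
        ε * iteratedDeriv 2 (fun t : ℝ ↦ φ (z + t * w)) 0 := by
    have hφw := hφ.comp_add_ofReal_mul w
    rw [iteratedDeriv_fun_sub (hu.comp_add_ofReal_mul w) (contDiffAt_const.mul hφw),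
      iteratedDeriv_const_mul _ hφw]
  have hx := hline 1
  simp only [mul_one] at hx
  simp only [hypLaplacian, hx, hline]
  ring

theorem hypLaplacian_neg (u : ℂ → ℝ) (z : ℂ) :
    hypLaplacian (fun w ↦ -u w) z = -hypLaplacian u z := by
  simp only [hypLaplacian, iteratedDeriv_fun_neg]
  ring

theorem Real.iteratedDeriv_two_log (a : ℝ) : iteratedDeriv 2 log a = -(a ^ 2)⁻¹ := by
  rw [iteratedDeriv_succ, iteratedDeriv_one, deriv_log', deriv_inv]

theorem Real.iteratedDeriv_two_log_sq_add {b : ℝ} (hb : 0 < b) (a : ℝ) :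
    iteratedDeriv 2 (fun s ↦ log (s ^ 2 + b)) a = 2 * (b - a ^ 2) / (a ^ 2 + b) ^ 2 := by
  have hpos (s : ℝ) : 0 < s ^ 2 + b := by positivity
  have hderiv : deriv (fun s ↦ log (s ^ 2 + b)) = fun s ↦ 2 * s / (s ^ 2 + b) := by
    funext s
    have := (((hasDerivAt_pow 2 s).add_const b).log (hpos s).ne').deriv
    rw [this]
    ring
  have hderiv2 :
      HasDerivAt (fun s ↦ 2 * s / (s ^ 2 + b)) (2 * (b - a ^ 2) / (a ^ 2 + b) ^ 2) a := by
    refine (((hasDerivAt_id' a).const_mul 2).fun_div ((hasDerivAt_pow 2 a).add_const b)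
      (hpos a).ne').congr_deriv ?_
    norm_num
    ring
  rw [iteratedDeriv_succ, iteratedDeriv_one, hderiv, hderiv2.deriv]

/-- `log (2 cosh d_ℍ(z, i))`, since `cosh d_ℍ(z, i) = (|z|² + 1) / (2 Im z)`. -/
noncomputable def hypExhaustion (z : ℂ) : ℝ :=
  log (z.re ^ 2 + z.im ^ 2 + 1) - log z.im

theorem hypExhaustion_nonneg {z : ℂ} (hz : 0 < z.im) : 0 ≤ hypExhaustion z := by
  rw [hypExhaustion, sub_nonneg]
  exact log_le_log hz (by nlinarith [sq_nonneg z.re, sq_nonneg (z.im - 1)])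

theorem hypExhaustion_le_iff {z : ℂ} (hz : 0 < z.im) {K : ℝ} :
    hypExhaustion z ≤ K ↔ z.re ^ 2 + z.im ^ 2 + 1 ≤ exp K * z.im := by
  rw [hypExhaustion, sub_le_iff_le_add, ← log_exp K, ← log_mul (exp_pos K).ne' hz.ne',
    log_le_log_iff (by positivity) (by positivity), log_exp]

theorem isCompact_hypExhaustion_sublevel (K : ℝ) :
    IsCompact {z ∈ UpperH | hypExhaustion z ≤ K} := by
  have hset : {z ∈ UpperH | hypExhaustion z ≤ K} =
      {z : ℂ | z.re ^ 2 + z.im ^ 2 + 1 ≤ exp K * z.im} := by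
    ext z
    constructor
    · rintro ⟨hz, hK⟩
      exact (hypExhaustion_le_iff hz).1 hK
    · intro (hK : z.re ^ 2 + z.im ^ 2 + 1 ≤ exp K * z.im)
      have hz : 0 < z.im := by
        by_contra! hz
        nlinarith [sq_nonneg z.re, sq_nonneg z.im,
          mul_nonpos_of_nonneg_of_nonpos (exp_pos K).le hz]
      exact ⟨hz, (hypExhaustion_le_iff hz).2 hK⟩
  rw [hset]
  refine Metric.isCompact_of_isClosed_isBounded (isClosed_le (by fun_prop) (by fun_prop)) ?_
  refine isBounded_iff_forall_norm_le.2
    ⟨exp K, fun z (hz : z.re ^ 2 + z.im ^ 2 + 1 ≤ exp K * z.im) ↦ ?_⟩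
  have hnorm : ‖z‖ ^ 2 = z.re ^ 2 + z.im ^ 2 := by
    rw [Complex.sq_norm, Complex.normSq_apply]; ring
  have him : z.im ≤ ‖z‖ := (le_abs_self _).trans (Complex.abs_im_le_norm z)
  by_contra! hlt
  nlinarith [mul_le_mul_of_nonneg_left him (exp_pos K).le,
    mul_lt_mul_of_pos_right hlt ((exp_pos K).trans hlt)]

theorem contDiffAt_hypExhaustion {n : WithTop ℕ∞} {z : ℂ} (hz : 0 < z.im) :
    ContDiffAt ℝ n hypExhaustion z := by
  have hre : ContDiff ℝ n Complex.re := Complex.reCLM.contDiff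
  have him : ContDiff ℝ n Complex.im := Complex.imCLM.contDiff
  refine ((((hre.pow 2).add (him.pow 2)).add contDiff_const).contDiffAt.log ?_).sub
    (him.contDiffAt.log hz.ne')
  positivity

theorem hypLaplacian_hypExhaustion {z : ℂ} (hz : 0 < z.im) :
    hypLaplacian hypExhaustion z = 1 + (2 * z.im / (z.re ^ 2 + z.im ^ 2 + 1)) ^ 2 := by
  have hx : (fun t : ℝ ↦ hypExhaustion (z + t)) =
      fun t ↦ -log z.im + (fun s ↦ log (s ^ 2 + (z.im ^ 2 + 1))) (z.re + t) := by
    funext t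
    simp only [hypExhaustion, Complex.add_re, Complex.add_im, Complex.ofReal_re,
      Complex.ofReal_im, add_zero]
    ring_nf
  have hy : (fun t : ℝ ↦ hypExhaustion (z + t * Complex.I)) =
      fun t ↦ (fun s ↦ log (s ^ 2 + (z.re ^ 2 + 1)) - log s) (z.im + t) := by
    funext t
    simp only [hypExhaustion, Complex.add_re, Complex.add_im, Complex.mul_re, Complex.mul_im,
      Complex.ofReal_re, Complex.ofReal_im, Complex.I_re, Complex.I_im]
    ring_nf
  have hlog : ContDiffAt ℝ 2 log z.im := contDiffAt_log.2 hz.ne'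
  have hlog_sq : ContDiffAt ℝ 2 (fun s ↦ log (s ^ 2 + (z.re ^ 2 + 1))) z.im :=
    ((contDiffAt_id.pow 2).add contDiffAt_const).log (by positivity)
  rw [hypLaplacian, hx, hy, iteratedDeriv_const_add two_pos,
    iteratedDeriv_comp_const_add 2 (fun s ↦ log (s ^ 2 + (z.im ^ 2 + 1))),
    iteratedDeriv_comp_const_add 2 (fun s ↦ log (s ^ 2 + (z.re ^ 2 + 1)) - log s)]
  simp only [add_zero]
  rw [iteratedDeriv_fun_sub hlog_sq hlog,
    iteratedDeriv_two_log_sq_add (by positivity), iteratedDeriv_two_log_sq_add (by positivity),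
    iteratedDeriv_two_log]
  field_simp
  ring

theorem hypLaplacian_hypExhaustion_le_two {z : ℂ} (hz : 0 < z.im) :
    hypLaplacian hypExhaustion z ≤ 2 := by
  have hq : 2 * z.im ≤ z.re ^ 2 + z.im ^ 2 + 1 := by
    nlinarith [sq_nonneg z.re, sq_nonneg (z.im - 1)]
  have hratio : 2 * z.im / (z.re ^ 2 + z.im ^ 2 + 1) ≤ 1 :=
    (div_le_one (by positivity)).2 hq
  rw [hypLaplacian_hypExhaustion hz]
  have hratio_nonneg : 0 ≤ 2 * z.im / (z.re ^ 2 + z.im ^ 2 + 1) := by positivity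
  nlinarith

theorem exists_isMaxOn_sub_of_isCompact_sublevel {X : Type*} [TopologicalSpace X] {U : Set X}
    {f φ : X → ℝ} (hf : ContinuousOn f U) (hφ : ContinuousOn φ U)
    (hφ_sublevel : ∀ K, IsCompact {x ∈ U | φ x ≤ K}) (hf_bdd : BddAbove (f '' U))
    {x₁ : X} (hx₁ : x₁ ∈ U) : ∃ x₀ ∈ U, IsMaxOn (fun x ↦ f x - φ x) U x₀ := by
  obtain ⟨M, hM⟩ := hf_bdd
  -- outside `S`, `f - φ` lies below its value at `x₁ ∈ S`, so a maximizer over `S` is global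
  set S := {x ∈ U | φ x ≤ M - f x₁ + φ x₁}
  have hS : S ⊆ U := sep_subset _ _
  have hx₁S : x₁ ∈ S := ⟨hx₁, by linarith [hM (mem_image_of_mem f hx₁)]⟩
  obtain ⟨x₀, hx₀S, hmax⟩ :=
    (hφ_sublevel _).exists_isMaxOn ⟨x₁, hx₁S⟩ ((hf.mono hS).sub (hφ.mono hS))
  refine ⟨x₀, hS hx₀S, fun x hx ↦ ?_⟩
  by_cases hxS : x ∈ S
  · exact hmax hxS
  have hφx : M - f x₁ + φ x₁ < φ x := not_le.1 fun h ↦ hxS ⟨hx, h⟩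
  have hfx := hM (mem_image_of_mem f hx)
  have h₁ : f x₁ - φ x₁ ≤ f x₀ - φ x₀ := hmax hx₁S
  show f x - φ x ≤ f x₀ - φ x₀
  linarith

theorem le_div_of_neg_hypLaplacian_add_mul_le {m W : ℝ} {c v : ℂ → ℝ} (hm : 0 < m)
    (hc : ∀ z ∈ UpperH, m ≤ c z) (hv : ContDiffOn ℝ 2 v UpperH)
    (hv_bdd : BddAbove (v '' UpperH)) (hW : 0 ≤ W)
    (hw : ∀ z ∈ UpperH, -hypLaplacian v z + c z * v z ≤ W)
    {z : ℂ} (hz : z ∈ UpperH) : v z ≤ W / m := by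
  have hφ_cont : ContinuousOn hypExhaustion UpperH := fun z hz ↦
    (contDiffAt_hypExhaustion (n := 0) hz).continuousAt.continuousWithinAt
  have hpenalized (ε : ℝ) (hε : 0 < ε) : v z ≤ W / m + ε * (2 / m + hypExhaustion z) := by
    have hsublevel (K : ℝ) : IsCompact {z ∈ UpperH | ε * hypExhaustion z ≤ K} := by
      simpa only [← le_div_iff₀' hε] using isCompact_hypExhaustion_sublevel (K / ε)
    obtain ⟨z₀, hz₀, hmax⟩ := exists_isMaxOn_sub_of_isCompact_sublevel
      (φ := fun z ↦ ε * hypExhaustion z) hv.continuousOn (continuousOn_const.mul hφ_cont)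
      hsublevel hv_bdd hz
    have hz₀_nhds : UpperH ∈ 𝓝 z₀ := isOpen_upperH.mem_nhds hz₀
    have hv₀ : ContDiffAt ℝ 2 v z₀ := hv.contDiffAt hz₀_nhds
    have hφ₀ : ContDiffAt ℝ 2 hypExhaustion z₀ := contDiffAt_hypExhaustion hz₀
    have hlap : hypLaplacian v z₀ ≤ 2 * ε := by
      have := hypLaplacian_nonpos_of_isLocalMax (u := fun w ↦ v w - ε * hypExhaustion w)
        (hv₀.continuousAt.sub (continuousAt_const.mul hφ₀.continuousAt))
        (hmax.isLocalMax hz₀_nhds)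
      rw [hypLaplacian_sub_const_mul hv₀ hφ₀] at this
      nlinarith [hypLaplacian_hypExhaustion_le_two hz₀]
    have hv₀_le : v z₀ ≤ (W + 2 * ε) / m := by
      rcases le_or_gt (v z₀) 0 with hneg | hpos
      · exact hneg.trans (by positivity)
      · rw [le_div_iff₀ hm]
        nlinarith [hw z₀ hz₀, mul_le_mul_of_nonneg_right (hc z₀ hz₀) hpos.le]
    have hz_le : v z - ε * hypExhaustion z ≤ v z₀ - ε * hypExhaustion z₀ := hmax hz
    have hφ₀_nonneg := mul_nonneg hε.le (hypExhaustion_nonneg hz₀)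
    calc v z ≤ (W + 2 * ε) / m + ε * hypExhaustion z := by linarith
      _ = W / m + ε * (2 / m + hypExhaustion z) := by ring
  have hC : 0 < 2 / m + hypExhaustion z := by
    have := hypExhaustion_nonneg hz
    positivity
  refine le_of_forall_pos_le_add fun δ hδ ↦ ?_
  simpa [div_mul_cancel₀ _ hC.ne'] using
    hpenalized (δ / (2 / m + hypExhaustion z)) (by positivity)

theorem abs_le_div_of_abs_neg_hypLaplacian_add_mul_le {m W M : ℝ} {c v : ℂ → ℝ} (hm : 0 < m)
    (hc : ∀ z ∈ UpperH, m ≤ c z) (hv : ContDiffOn ℝ 2 v UpperH)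
    (hv_bdd : ∀ z ∈ UpperH, |v z| ≤ M) (hW : 0 ≤ W)
    (hw : ∀ z ∈ UpperH, |-hypLaplacian v z + c z * v z| ≤ W)
    {z : ℂ} (hz : z ∈ UpperH) : |v z| ≤ W / m := by
  have hv_le : v z ≤ W / m :=
    le_div_of_neg_hypLaplacian_add_mul_le hm hc hv
      ⟨M, forall_mem_image.2 fun z hz ↦ (le_abs_self _).trans (hv_bdd z hz)⟩ hW
      (fun z hz ↦ (le_abs_self _).trans (hw z hz)) hz
  have hneg_v_le : -v z ≤ W / m := by
    refine le_div_of_neg_hypLaplacian_add_mul_le (v := fun z ↦ -v z) hm hc hv.neg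
      ⟨M, forall_mem_image.2 fun z hz ↦ (neg_le_abs _).trans (hv_bdd z hz)⟩ hW
      (fun z hz ↦ ?_) hz
    rw [hypLaplacian_neg, mul_neg, ← neg_add]
    exact (neg_le_abs _).trans (hw z hz)
  exact abs_le.2 ⟨by linarith, hv_le⟩

theorem linearized_sup_estimate_general
    (m : ℝ) (hm : 0 < m)
    (c : ℂ → ℝ)
    (hc_low : ∀ z ∈ UpperH, m ≤ c z)
    (v : ℂ → ℝ)
    (hv_smooth : ContDiffOn ℝ 2 v UpperH)
    (hv_bdd : ∃ M : ℝ, ∀ z ∈ UpperH, |v z| ≤ M)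
    (hw_bdd : ∃ M : ℝ, ∀ z ∈ UpperH, |-hypLaplacian v z + c z * v z| ≤ M) :
    sSup ((fun z => |v z|) '' UpperH) ≤
      m⁻¹ * sSup ((fun z => |-hypLaplacian v z + c z * v z|) '' UpperH) := by
  obtain ⟨M, hM⟩ := hv_bdd
  obtain ⟨Mw, hMw⟩ := hw_bdd
  set W := sSup ((fun z => |-hypLaplacian v z + c z * v z|) '' UpperH)
  have hw_le : ∀ z ∈ UpperH, |-hypLaplacian v z + c z * v z| ≤ W := fun z hz ↦
    le_csSup ⟨Mw, forall_mem_image.2 hMw⟩ (mem_image_of_mem _ hz)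
  have hI : Complex.I ∈ UpperH := by simp [UpperH]
  have hW : 0 ≤ W := (abs_nonneg _).trans (hw_le _ hI)
  rw [← div_eq_inv_mul]
  refine csSup_le (Nonempty.image _ ⟨_, hI⟩) (forall_mem_image.2 fun z hz ↦ ?_)
  exact abs_le_div_of_abs_neg_hypLaplacian_add_mul_le hm hc_low hv_smooth hM hW hw_le hz

/-- A priori sup-norm estimate for the linearized operator `L v = −Δ_ℍ v + c·v`:
`sup |v| ≤ m⁻¹ sup |Lv|`. -/
theorem linearized_sup_estimate
    (m : ℝ) (hm : 0 < m)
    (c : ℂ → ℝ) (hc_cont : ContinuousOn c UpperH)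
    (hc_low : ∀ z ∈ UpperH, m ≤ c z)
    (v : ℂ → ℝ)
    (hv_smooth : ContDiffOn ℝ 2 v UpperH)
    (hv_bdd : ∃ M : ℝ, ∀ z ∈ UpperH, |v z| ≤ M)
    (hw_bdd : ∃ M : ℝ, ∀ z ∈ UpperH, |-hypLaplacian v z + c z * v z| ≤ M) :
    sSup ((fun z => |v z|) '' UpperH) ≤
      m⁻¹ * sSup ((fun z => |-hypLaplacian v z + c z * v z|) '' UpperH) :=
  linearized_sup_estimate_general m hm c hc_low v hv_smooth hv_bdd hw_bdd
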